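/- Let u₃(x,p) = (p+3)²x² + (p+3)(7p+3)x + (-3p³+13p²+21p+9). Then u₃(x,p) ≤ 0 for all x ∈ (0,1) if and only if p ≥ 9. -/
import Mathlib


theorem stmt3 (p : ℝ) :
    (∀ x ∈ Set.Ioo (0:ℝ) 1,
      (p+3)^2*x^2 + (p+3)*(7*p+3)*x + (-3*p^3 + 13*p^2 + 21*p + 9) ≤ 0) ↔ 9 ≤ p := by
  constructor
  · intro h
    set f : ℝ → ℝ := fun x => (p+3)^2*x^2 + (p+3)*(7*p+3)*x + (-3*p^3 + 13*p^2 + 21*p + 9) with hf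
    have hcont : Continuous f := by fun_prop
    haveI : (nhdsWithin (1:ℝ) (Set.Ioo 0 1)).NeBot := by
      rw [← mem_closure_iff_nhdsWithin_neBot, closure_Ioo (by norm_num : (0:ℝ) ≠ 1)]
      constructor <;> norm_num
    have htend : Filter.Tendsto f (nhdsWithin (1:ℝ) (Set.Ioo 0 1)) (nhds (f 1)) :=
      (hcont.tendsto 1).mono_left nhdsWithin_le_nhds
    have hev : ∀ᶠ x in nhdsWithin (1:ℝ) (Set.Ioo 0 1), f x ≤ 0 :=
      eventually_nhdsWithin_of_forall h
    have h1 : f 1 ≤ 0 := le_of_tendsto htend hev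
    have hhalf : f (1/2) ≤ 0 := h (1/2) (by norm_num)
    simp only [hf] at h1 hhalf
    by_contra hlt
    push_neg at hlt
    have h9 : (0:ℝ) < 9 - p := by linarith
    have hsq : (p+1)^2 ≤ 0 := by nlinarith [h1, h9]
    have h0 : (p+1)^2 = 0 := le_antisymm hsq (sq_nonneg _)
    have hpe : p = -1 := by
      have := sq_eq_zero_iff.mp h0; linarith
    subst hpe
    norm_num at hhalf
  · intro hp x hx
    obtain ⟨hx0, hx1⟩ := hx
    nlinarith [mul_nonneg (le_of_lt hx0) (sub_nonneg.mpr (le_of_lt hx1)),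
      mul_nonneg (mul_nonneg (le_of_lt hx0) (sub_nonneg.mpr (le_of_lt hx1))) (sq_nonneg (p+3)),
      sq_nonneg (p+1), mul_nonneg (sub_nonneg.mpr hp) (sq_nonneg (p+1)),
      mul_nonneg (le_of_lt hx0) (mul_nonneg (sub_nonneg.mpr hp) (sq_nonneg (p+1))),
      mul_nonneg (sub_nonneg.mpr (le_of_lt hx1)) (mul_nonneg (sub_nonneg.mpr hp) (sq_nonneg (p+1))),
      sq_nonneg p, hp]
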